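/- Let n ≥ 3, let K be a field, and consider the polynomial ring K[x_S : S ∈ P_n] with one variable for each element of P_n. Let I be the ideal generated by all products x_S · x_T where S, T ∈ P_n are incomparable under inclusion (neither S ⊆ T nor T ⊆ S), and let A = K[x_S : S ∈ P_n]/I, a graded algebra. Then for every integer k ≥ 1, the K-dimension of the degree-k homogeneous component of A equals Σ_{j=0}^{⌊(n−1)/2⌋} p_{n,j−1} · k^j; that is, the Hilbert polynomial of A is x^{⌊(n−1)/2⌋} · P_n(1/x) where P_n is the f-polynomial of P_n. -/

import Mathlib

open Finset Polynomial

/-- `σ` is a permutation of `[n] = {1, …, n}` (viewed as a function `ℕ → ℕ`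
restricted to a bijection of `{1, …, n}` onto itself). -/
def IsPermOn (n : ℕ) (σ : ℕ → ℕ) : Prop :=
  Set.BijOn σ (Set.Icc 1 n) (Set.Icc 1 n)

/-- The circular peak set of `σ` (as a permutation of `[n]`):
`CP(σ) = {σ(i) : 2 ≤ i ≤ n−1, σ(i−1) < σ(i) > σ(i+1)}`. -/
def CP (n : ℕ) (σ : ℕ → ℕ) : Finset ℕ :=
  ((Finset.Icc 2 (n - 1)).filter (fun i => σ (i - 1) < σ i ∧ σ (i + 1) < σ i)).image σ

open scoped Classical in
/-- `Pn n` is the collection of all subsets `S ⊆ [n]` arising as the circular peak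
set of some permutation of `[n]`. -/
noncomputable def Pn (n : ℕ) : Finset (Finset ℕ) :=
  (Finset.Icc 1 n).powerset.filter (fun S => ∃ σ : ℕ → ℕ, IsPermOn n σ ∧ CP n σ = S)

/-- `pcount n k` is the number of members of `Pn n` of cardinality `k`;
in the paper's notation, `p_{n,i} = pcount n (i+1)`. -/
noncomputable def pcount (n k : ℕ) : ℕ :=
  ((Pn n).filter (fun S => S.card = k)).card

/-- The f-polynomial `P_n(x) = Σ_{i=0}^{⌊(n−1)/2⌋} p_{n,i−1} x^{⌊(n−1)/2⌋−i}`. -/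
noncomputable def fpoly (n : ℕ) : Polynomial ℚ :=
  ∑ i ∈ Finset.range ((n - 1) / 2 + 1),
    Polynomial.C (pcount n i : ℚ) * Polynomial.X ^ ((n - 1) / 2 - i)

/-!
The degree-`k` part of `A` has as a basis the monomials of degree `k` divisible by no product
`x_S x_T` of incomparable sets, that is, the multichains `S₁ ⊆ ⋯ ⊆ S_k` in `P_n`.

Peak sets are characterised by counting: `S ∈ P_n` iff `S ⊆ [n]` and every `v ∈ S` exceeds
twice the number of elements of `S` that are at most `v`. Necessity holds because the peaks of
value `≤ v`, their right neighbours and the left neighbour of the leftmost one occupy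
`2q + 1` positions with values in `[1, v]`. Conversely, the permutation listing the elements of
`S` increasingly at positions `2, 4, …, 2|S|` and the rest of `[n]` increasingly elsewhere has
peak set `S`. The condition is inherited by subsets, so `P_n` is closed under subsets.

Removing one copy of the largest set of a multichain of length `k + 1` in such a family `P`
leaves a multichain of length `k` in the power set of that set, and by induction and the
binomial theorem the power set of `S` carries `(k + 1)^|S|` multichains of length `k`. Hence
`dim A_k = ∑_{S ∈ P_n} k^|S|`, and grouping the sets by size gives the formula.
-/

theorem Finsupp.support_add_single_one {ι : Type*} [DecidableEq ι] (e : ι →₀ ℕ) (m : ι) :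
    (e + single m 1).support = insert m e.support := by
  rw [support_add_eq_union, support_single _ one_ne_zero, union_comm]
  rfl

theorem Finsupp.single_add_single_le_iff {ι : Type*} {S T : ι} (hST : S ≠ T) (d : ι →₀ ℕ) :
    single S 1 + single T 1 ≤ d ↔ S ∈ d.support ∧ T ∈ d.support := by
  classical
  rw [le_iff, support_add_single_one, support_single _ one_ne_zero]
  simp [single_apply, hST, hST.symm, Nat.one_le_iff_ne_zero, and_comm]

theorem IsChain.exists_isGreatest {β : Type*} [PartialOrder β] {t : Finset β}
    (ht : IsChain (· ≤ ·) (t : Set β)) (hne : t.Nonempty) : ∃ m, IsGreatest (t : Set β) m := by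
  obtain ⟨m, hm⟩ := t.exists_maximal hne
  refine ⟨m, hm.prop, fun b hb => ?_⟩
  rcases eq_or_ne b m with rfl | hbm
  · exact le_rfl
  · exact (ht hb hm.prop hbm).resolve_right fun hmb => hbm (hm.eq_of_ge hb hmb)

theorem OrderEmbedding.isChain_image_iff {β γ : Type*} [PartialOrder β] [PartialOrder γ]
    (f : β ↪o γ) {t : Set β} : IsChain (· ≤ ·) (f '' t) ↔ IsChain (· ≤ ·) t := by
  refine ⟨fun h => ?_, fun h => h.image f⟩
  simpa [Set.preimage_image_eq _ f.injective] using h.preimage_relEmbedding f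

theorem Nat.count_add_count_not (p : ℕ → Prop) [DecidablePred p] (a : ℕ) :
    count p a + count (fun x => ¬ p x) a = a := by
  induction a with
  | zero => simp
  | succ a ih =>
    rw [count_succ, count_succ]
    split_ifs <;> omega

section Multichains

variable {β : Type*} [PartialOrder β]

open scoped Classical in
/-- A multichain of length `k` in `s` (a multiset of `k` elements of `s` any two of which are
comparable), recorded by its multiplicity function. -/
noncomputable def multichains (s : Finset β) (k : ℕ) : Finset (β →₀ ℕ) :=
  (s.finsuppAntidiag k).filter fun d => IsChain (· ≤ ·) (d.support : Set β)

theorem mem_multichains {s : Finset β} {k : ℕ} {d : β →₀ ℕ} :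
    d ∈ multichains s k ↔
      d.support ⊆ s ∧ d.degree = k ∧ IsChain (· ≤ ·) (d.support : Set β) := by
  classical
  rw [multichains, mem_filter, mem_finsuppAntidiag', Finsupp.degree_apply,
    and_comm (a := _ = k), and_assoc]
  rfl

theorem multichains_zero (s : Finset β) : multichains s 0 = {0} := by
  ext d
  simp only [mem_multichains, Finsupp.degree_eq_zero_iff, mem_singleton]
  constructor
  · exact fun h => h.2.1
  · rintro rfl
    simp

theorem isGreatest_support_add_single {m : β} {e : β →₀ ℕ} (he : ∀ b ∈ e.support, b ≤ m) :
    IsGreatest ((e + Finsupp.single m 1).support : Set β) m := by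
  classical
  rw [Finsupp.support_add_single_one, coe_insert]
  exact ⟨Set.mem_insert m _, Set.forall_mem_insert.2 ⟨le_rfl, he⟩⟩

variable [DecidableLE β]

theorem add_single_mem_multichains {s : Finset β} {k : ℕ} {m : β} (hm : m ∈ s) {e : β →₀ ℕ}
    (he : e ∈ multichains {b ∈ s | b ≤ m} k) : e + Finsupp.single m 1 ∈ multichains s (k + 1) := by
  classical
  obtain ⟨hes, hdeg, hch⟩ := mem_multichains.1 he
  simp only [subset_iff, mem_filter] at hes
  refine mem_multichains.2 ⟨?_, by simp [hdeg], ?_⟩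
  · rw [Finsupp.support_add_single_one]
    exact insert_subset hm fun b hb => (hes hb).1
  · rw [Finsupp.support_add_single_one, coe_insert]
    exact hch.insert fun b hb _ => Or.inr (hes hb).2

theorem exists_add_single_eq_of_mem_multichains {s : Finset β} {k : ℕ} {d : β →₀ ℕ}
    (hd : d ∈ multichains s (k + 1)) :
    ∃ m ∈ s, ∃ e ∈ multichains {b ∈ s | b ≤ m} k, e + Finsupp.single m 1 = d := by
  obtain ⟨hds, hdeg, hch⟩ := mem_multichains.1 hd
  have hne : d.support.Nonempty := by
    rw [Finsupp.support_nonempty_iff]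
    rintro rfl
    simp at hdeg
  obtain ⟨m, hm, hm_top⟩ := hch.exists_isGreatest hne
  have hdm : Finsupp.single m 1 ≤ d :=
    Finsupp.single_le_iff.2 (Nat.one_le_iff_ne_zero.2 (Finsupp.mem_support_iff.1 hm))
  have hsupp : (d - Finsupp.single m 1).support ⊆ d.support := Finsupp.support_mono tsub_le_self
  have hdeg' := congrArg Finsupp.degree (tsub_add_cancel_of_le hdm)
  rw [map_add, Finsupp.degree_single, hdeg, Nat.add_right_cancel_iff] at hdeg'
  refine ⟨m, hds hm, d - Finsupp.single m 1, mem_multichains.2 ⟨fun b hb => ?_, hdeg',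
    hch.mono (coe_subset.2 hsupp)⟩, tsub_add_cancel_of_le hdm⟩
  exact mem_filter.2 ⟨hds (hsupp hb), hm_top (hsupp hb)⟩

theorem card_multichains_succ (s : Finset β) (k : ℕ) :
    #(multichains s (k + 1)) = ∑ m ∈ s, #(multichains {b ∈ s | b ≤ m} k) := by
  rw [← card_sigma]
  refine (card_bij (fun x _ => x.2 + Finsupp.single x.1 1)
    (fun x hx => add_single_mem_multichains (mem_sigma.1 hx).1 (mem_sigma.1 hx).2) ?_
    fun d hd => ?_).symm
  · rintro ⟨m, e⟩ he ⟨m', e'⟩ he' h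
    have top (m : β) (e : β →₀ ℕ) (he : e ∈ multichains {b ∈ s | b ≤ m} k) :=
      isGreatest_support_add_single fun b hb => (mem_filter.1 ((mem_multichains.1 he).1 hb)).2
    obtain rfl : m = m' := (top m e (mem_sigma.1 he).2).unique (h ▸ top m' e' (mem_sigma.1 he').2)
    simpa using h
  · obtain ⟨m, hm, e, he, rfl⟩ := exists_add_single_eq_of_mem_multichains hd
    exact ⟨⟨m, e⟩, mem_sigma.2 ⟨hm, he⟩, rfl⟩

end Multichains

section OrderEmbedding

variable {β γ : Type*} [PartialOrder β] [PartialOrder γ]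

theorem embDomain_mem_multichains_map_iff (f : β ↪o γ) {s : Finset β} {k : ℕ} {d : β →₀ ℕ} :
    d.embDomain f.toEmbedding ∈ multichains (s.map f.toEmbedding) k ↔ d ∈ multichains s k := by
  rw [mem_multichains, mem_multichains, Finsupp.support_embDomain, map_subset_map, coe_map,
    Finsupp.embDomain_eq_mapDomain, Finsupp.degree_mapDomain]
  exact and_congr_right' (and_congr_right' f.isChain_image_iff)

theorem card_multichains_map (f : β ↪o γ) (s : Finset β) (k : ℕ) :
    #(multichains (s.map f.toEmbedding) k) = #(multichains s k) := by
  refine (card_bij (fun d _ => d.embDomain f.toEmbedding)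
    (fun d hd => (embDomain_mem_multichains_map_iff f).2 hd)
    (fun d _ d' _ h => Finsupp.embDomain_injective _ h) fun d hd => ?_).symm
  have hsupp : (d.support : Set γ) ⊆ Set.range f := by
    intro x hx
    obtain ⟨b, -, rfl⟩ := mem_map.1 ((mem_multichains.1 hd).1 hx)
    exact ⟨b, rfl⟩
  refine ⟨_, ?_, Finsupp.embDomain_comapDomain hsupp⟩
  rwa [← embDomain_mem_multichains_map_iff f, Finsupp.embDomain_comapDomain hsupp]

theorem card_multichains_univ_coe (s : Finset β) (k : ℕ) :
    #(multichains (univ : Finset s) k) = #(multichains s k) := by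
  rw [← card_multichains_map (OrderEmbedding.subtype (· ∈ s)), univ_eq_attach]
  congr 2
  exact attach_map_val

end OrderEmbedding

section LowerSets

variable {α : Type*} [DecidableEq α] {P : Finset (Finset α)}

theorem card_multichains_succ_of_isLowerSet (hP : IsLowerSet (P : Set (Finset α))) (k : ℕ) :
    #(multichains P (k + 1)) = ∑ S ∈ P, #(multichains S.powerset k) := by
  rw [card_multichains_succ]
  refine sum_congr rfl fun S hS => ?_
  congr 2
  ext T
  simp only [mem_filter, mem_powerset]
  exact ⟨And.right, fun hT => ⟨hP hT hS, hT⟩⟩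

theorem card_multichains_powerset (t : Finset α) (k : ℕ) :
    #(multichains t.powerset k) = (k + 1) ^ #t := by
  induction k generalizing t with
  | zero => simp [multichains_zero]
  | succ k ih =>
    rw [card_multichains_succ_of_isLowerSet
      fun _ _ hba ha => mem_powerset.2 (hba.trans (mem_powerset.1 ha))]
    simpa [ih] using sum_pow_mul_eq_add_pow (k + 1) 1 t

theorem card_multichains_of_isLowerSet (hP : IsLowerSet (P : Set (Finset α))) (k : ℕ) :
    #(multichains P (k + 1)) = ∑ S ∈ P, (k + 1) ^ #S := by
  simp only [card_multichains_succ_of_isLowerSet hP, card_multichains_powerset]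

end LowerSets

theorem finrank_map_homogeneousSubmodule_quotient_span_monomial {σ : Type*} (K : Type*)
    [Field K] (s : Set (σ →₀ ℕ)) (k : ℕ) :
    Module.finrank K ((MvPolynomial.homogeneousSubmodule σ K k).map (Ideal.Quotient.mkₐ K
      (Ideal.span ((fun e => MvPolynomial.monomial e (1 : K)) '' s))).toLinearMap) =
      {d : σ →₀ ℕ | d.degree = k ∧ ∀ e ∈ s, ¬ e ≤ d}.ncard := by
  set I := Ideal.span ((fun e => MvPolynomial.monomial e (1 : K)) '' s)
  set D := {d : σ →₀ ℕ | d.degree = k ∧ ∀ e ∈ s, ¬ e ≤ d}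
  set π := (Ideal.Quotient.mkₐ K I).toLinearMap
  have hspan : (MvPolynomial.homogeneousSubmodule σ K k).map π =
      Submodule.span K (Set.range fun d : D => π (MvPolynomial.monomial d.1 1)) := by
    rw [MvPolynomial.homogeneousSubmodule_eq_finsupp_supported, ← MvPolynomial.restrictSupport,
      MvPolynomial.restrictSupport_eq_span, Submodule.map_span, Set.image_image]
    refine le_antisymm (Submodule.span_le.2 ?_) (Submodule.span_mono ?_)
    · rintro _ ⟨d, hd, rfl⟩
      by_cases h : ∀ e ∈ s, ¬ e ≤ d
      · exact Submodule.subset_span ⟨⟨d, hd, h⟩, rfl⟩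
      · push Not at h
        have : MvPolynomial.monomial d (1 : K) ∈ I :=
          MvPolynomial.mem_ideal_span_monomial_image.2 fun d' hd' => by
            rwa [mem_singleton.1 (MvPolynomial.support_monomial_subset hd')]
        simp [π, Ideal.Quotient.eq_zero_iff_mem.2 this]
    · rintro _ ⟨d, rfl⟩
      exact ⟨d.1, d.2.1, rfl⟩
  have hli : LinearIndependent K fun d : D => π (MvPolynomial.monomial d.1 1) := by
    have hmon : LinearIndependent K fun d : D => MvPolynomial.monomial d.1 (1 : K) :=
      (MvPolynomial.basisMonomials σ K).linearIndependent.comp _ Subtype.val_injective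
    refine hmon.map (Submodule.disjoint_def.2 fun p hp hpI => ?_)
    rw [Set.range_comp' (MvPolynomial.monomial · 1) Subtype.val, Subtype.range_coe,
      ← MvPolynomial.restrictSupport_eq_span, MvPolynomial.mem_restrictSupport_iff] at hp
    rw [LinearMap.mem_ker, AlgHom.toLinearMap_apply, Ideal.Quotient.mkₐ_eq_mk,
      Ideal.Quotient.eq_zero_iff_mem, MvPolynomial.mem_ideal_span_monomial_image] at hpI
    ext d
    by_contra hd
    have hd : d ∈ p.support := MvPolynomial.mem_support_iff.2 hd
    obtain ⟨e, he, hed⟩ := hpI d hd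
    exact (hp hd).2 e he hed
  rw [hspan, Module.finrank_eq_nat_card_basis (Module.Basis.span hli), Nat.card_coe_set_eq]

theorem setOf_X_mul_X_eq_image_monomial {β K : Type*} [CommSemiring K] (r : β → β → Prop) :
    {p : MvPolynomial β K | ∃ S T, r S T ∧ p = MvPolynomial.X S * MvPolynomial.X T} =
      (fun e => MvPolynomial.monomial e 1) ''
        {e | ∃ S T, r S T ∧ e = Finsupp.single S 1 + Finsupp.single T 1} := by
  ext p
  simp only [Set.mem_ofPred_eq, Set.mem_image]
  constructor
  · rintro ⟨S, T, h, rfl⟩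
    exact ⟨_, ⟨S, T, h, rfl⟩, by simp [MvPolynomial.X, MvPolynomial.monomial_mul]⟩
  · rintro ⟨_, ⟨S, T, h, rfl⟩, rfl⟩
    exact ⟨S, T, h, by simp [MvPolynomial.X, MvPolynomial.monomial_mul]⟩

theorem finrank_map_homogeneousSubmodule_quotient_incomparable (β : Type*) [Fintype β]
    [PartialOrder β] (K : Type*) [Field K] (k : ℕ) :
    Module.finrank K ((MvPolynomial.homogeneousSubmodule β K k).map (Ideal.Quotient.mkₐ K
      (Ideal.span {p : MvPolynomial β K | ∃ S T : β, (¬ S ≤ T ∧ ¬ T ≤ S) ∧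
        p = MvPolynomial.X S * MvPolynomial.X T})).toLinearMap) =
      #(multichains (univ : Finset β) k) := by
  rw [setOf_X_mul_X_eq_image_monomial, finrank_map_homogeneousSubmodule_quotient_span_monomial,
    ← Set.ncard_coe_finset]
  congr 1
  ext d
  simp only [Set.mem_ofPred_eq, mem_coe, mem_multichains, subset_univ, true_and]
  refine and_congr_right' ⟨fun h S hS T hT hST => ?_, fun h e ⟨S, T, hinc, he⟩ hle => ?_⟩
  · by_contra! hinc
    exact h _ ⟨S, T, hinc, rfl⟩ ((Finsupp.single_add_single_le_iff hST d).2 ⟨hS, hT⟩)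
  · have hST : S ≠ T := fun h => hinc.1 h.le
    obtain ⟨hS, hT⟩ := (Finsupp.single_add_single_le_iff hST d).1 (he ▸ hle)
    exact (h hS hT hST).elim hinc.1 hinc.2

section PeakSets

theorem card_insert_union_image_add_one {Q : Finset ℕ} {a : ℕ} (hQ : ∀ p ∈ Q, p + 1 ∉ Q)
    (ha : ∀ p ∈ Q, a < p) : #(insert a (Q ∪ Q.image (· + 1))) = 2 * #Q + 1 := by
  have hdisj : Disjoint Q (Q.image (· + 1)) := by
    rw [disjoint_right]
    intro p hp hpQ
    obtain ⟨q, hq, rfl⟩ := mem_image.1 hp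
    exact hQ q hq hpQ
  have ha' : a ∉ Q ∪ Q.image (· + 1) := by
    simp only [mem_union, mem_image, not_or, not_exists, not_and]
    exact ⟨fun h => (ha a h).false, fun q hq h => by have := ha q hq; omega⟩
  rw [card_insert_of_notMem ha', card_union_of_disjoint hdisj,
    card_image_of_injective _ (add_left_injective 1)]
  ring

variable {n : ℕ} {σ : ℕ → ℕ}

theorem two_mul_card_add_one_le_of_subset_peaks (hσ : IsPermOn n σ) {Q : Finset ℕ}
    (hQ : ∀ p ∈ Q, p ∈ Icc 2 (n - 1) ∧ σ (p - 1) < σ p ∧ σ (p + 1) < σ p) {m v : ℕ}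
    (hmQ : m ∈ Q) (hm : ∀ p ∈ Q, m ≤ p) (hv : ∀ p ∈ Q, σ p ≤ v) : 2 * #Q + 1 ≤ v := by
  have hnonadj : ∀ p ∈ Q, p + 1 ∉ Q := fun p hp hp1 => by
    have h1 := (hQ p hp).2.2
    have h2 := (hQ (p + 1) hp1).2.1
    rw [Nat.add_sub_cancel] at h2
    omega
  have hm2 := mem_Icc.1 (hQ m hmQ).1
  have hcard := card_insert_union_image_add_one hnonadj (a := m - 1) fun p hp => by
    have := hm p hp
    omega
  have hN : ∀ x ∈ insert (m - 1) (Q ∪ Q.image (· + 1)), x ∈ Set.Icc 1 n ∧ σ x ≤ v := by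
    intro x hx
    simp only [mem_insert, mem_union, mem_image] at hx
    rcases hx with rfl | hx | ⟨q, hq, rfl⟩
    · have := (hQ m hmQ).2.1
      have := hv m hmQ
      exact ⟨⟨by omega, by omega⟩, by omega⟩
    · have := mem_Icc.1 (hQ x hx).1
      exact ⟨⟨by omega, by omega⟩, hv x hx⟩
    · have := mem_Icc.1 (hQ q hq).1
      have := (hQ q hq).2.2
      have := hv q hq
      exact ⟨⟨by omega, by omega⟩, by omega⟩
  have := card_le_card_of_injOn σ (t := Icc 1 v)
    (fun x hx => mem_Icc.2 ⟨(hσ.mapsTo (hN x hx).1).1, (hN x hx).2⟩)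
    (fun x hx y hy => hσ.injOn (hN x hx).1 (hN y hy).1)
  rwa [hcard, Nat.card_Icc, Nat.add_sub_cancel] at this

theorem two_mul_card_filter_le_lt_of_mem_CP (hσ : IsPermOn n σ) {v : ℕ} (hv : v ∈ CP n σ) :
    2 * #{x ∈ CP n σ | x ≤ v} < v := by
  set Q := {p ∈ Icc 2 (n - 1) | σ (p - 1) < σ p ∧ σ (p + 1) < σ p ∧ σ p ≤ v}
  have hQ : ∀ p ∈ Q, p ∈ Icc 2 (n - 1) ∧ σ (p - 1) < σ p ∧ σ (p + 1) < σ p := fun p hp => by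
    grind
  have hcard : #{x ∈ CP n σ | x ≤ v} = #Q := by
    rw [CP, filter_image, filter_filter]
    simp only [and_assoc]
    exact card_image_of_injOn fun p hp q hq => hσ.injOn (by grind) (by grind)
  have hne : Q.Nonempty := by
    obtain ⟨p, hp, rfl⟩ := mem_image.1 hv
    exact ⟨p, by grind⟩
  have := two_mul_card_add_one_le_of_subset_peaks hσ hQ (Q.min'_mem hne)
    (fun p hp => Q.min'_le p hp) (fun p hp => (mem_filter.1 hp).2.2.2)
  omega

end PeakSets

section Realization

variable {n : ℕ} {S : Finset ℕ}

/-- For `i < #S` this is the `i`-th smallest element of `S`. Adjoining all numbers above `n` makes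
the defining predicate infinite, so that `Nat.nth` is strictly monotone. -/
noncomputable def peakValue (n : ℕ) (S : Finset ℕ) : ℕ → ℕ := Nat.nth fun x => x ∈ S ∨ n < x

noncomputable def gapValue (S : Finset ℕ) : ℕ → ℕ := Nat.nth (· ∉ S)

/-- The values `peakValue n S 0, …, peakValue n S (#S - 1)` sit at the positions
`2, 4, …, 2 #S`, and `gapValue S 1, gapValue S 2, …` fill the other positions `1, 3, …` in order. -/
noncomputable def peakPerm (n : ℕ) (S : Finset ℕ) (p : ℕ) : ℕ :=
  if p % 2 = 0 ∧ 2 ≤ p ∧ p ≤ 2 * #S then peakValue n S (p / 2 - 1)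
  else gapValue S (p - min #S (p / 2))

theorem infinite_setOf_mem_or_lt : {x | x ∈ S ∨ n < x}.Infinite :=
  (Set.Ioi_infinite n).mono fun _ hx => Or.inr hx

theorem peakValue_strictMono : StrictMono (peakValue n S) :=
  Nat.nth_strictMono infinite_setOf_mem_or_lt

theorem gapValue_strictMono : StrictMono (gapValue S) :=
  Nat.nth_strictMono S.finite_toSet.infinite_compl

theorem gapValue_notMem (l : ℕ) : gapValue S l ∉ S :=
  Nat.nth_mem_of_infinite S.finite_toSet.infinite_compl l

theorem count_peakValue (i : ℕ) : Nat.count (fun x => x ∈ S ∨ n < x) (peakValue n S i) = i :=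
  Nat.count_nth_of_infinite infinite_setOf_mem_or_lt i

theorem count_mem_or_lt_of_le {a : ℕ} (ha : a ≤ n + 1) :
    Nat.count (fun x => x ∈ S ∨ n < x) a = Nat.count (· ∈ S) a := by
  simp only [Nat.count_eq_card_filter_range]
  refine congrArg card (filter_congr fun x hx => ?_)
  have := mem_range.1 hx
  exact or_iff_left (by omega)

theorem peakPerm_two_mul_add_two {i : ℕ} (hi : i < #S) :
    peakPerm n S (2 * i + 2) = peakValue n S i := by
  rw [peakPerm, if_pos (by omega)]
  congr 1
  omega

theorem peakPerm_two_mul_add_one {i : ℕ} (hi : i ≤ #S) :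
    peakPerm n S (2 * i + 1) = gapValue S (i + 1) := by
  rw [peakPerm, if_neg (by omega)]
  congr 1
  omega

theorem peakPerm_of_two_mul_card_lt {p : ℕ} (hp : 2 * #S < p) :
    peakPerm n S p = gapValue S (p - #S) := by
  rw [peakPerm, if_neg (by omega)]
  congr 1
  omega

variable (hS : S ⊆ Icc 1 n)
include hS

theorem count_mem_succ_eq_card : Nat.count (· ∈ S) (n + 1) = #S := by
  rw [Nat.count_eq_card_filter_range, filter_mem_eq_inter,
    inter_eq_right.2 fun x hx => mem_range.2 (Nat.lt_succ_of_le (mem_Icc.1 (hS hx)).2)]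

theorem peakValue_mem {i : ℕ} (hi : i < #S) : peakValue n S i ∈ S := by
  have hlt : peakValue n S i < n + 1 := by
    refine Nat.nth_lt_of_lt_count ?_
    rwa [count_mem_or_lt_of_le le_rfl, count_mem_succ_eq_card hS]
  exact (Nat.nth_mem_of_infinite infinite_setOf_mem_or_lt i).resolve_right
    (Nat.lt_succ_iff.1 hlt).not_gt

theorem peakValue_le {i : ℕ} (hi : i < #S) : peakValue n S i ≤ n :=
  (mem_Icc.1 (hS (peakValue_mem hS hi))).2

theorem image_peakValue : (range #S).image (peakValue n S) = S := by
  refine eq_of_subset_of_card_le (fun x hx => ?_) ?_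
  · obtain ⟨i, hi, rfl⟩ := mem_image.1 hx
    exact peakValue_mem hS (mem_range.1 hi)
  · rw [card_image_of_injective _ peakValue_strictMono.injective, card_range]

theorem card_filter_le_peakValue {i : ℕ} (hi : i < #S) :
    #{x ∈ S | x ≤ peakValue n S i} = i + 1 := by
  have hle := peakValue_le hS hi
  rw [← Nat.count_nth_succ_of_infinite (infinite_setOf_mem_or_lt (n := n) (S := S)) i,
    ← peakValue, count_mem_or_lt_of_le (by omega), Nat.count_eq_card_filter_range]
  congr 1
  ext x
  simp only [mem_filter, mem_range, Nat.lt_succ_iff, and_comm]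

theorem count_notMem_peakValue {i : ℕ} (hi : i < #S) :
    Nat.count (· ∉ S) (peakValue n S i) = peakValue n S i - i := by
  have := Nat.count_add_count_not (· ∈ S) (peakValue n S i)
  have hle := peakValue_le hS hi
  rw [← count_mem_or_lt_of_le (n := n) (by omega), count_peakValue] at this
  omega

theorem gapValue_le {l : ℕ} (hl : l + #S ≤ n) : gapValue S l ≤ n := by
  suffices gapValue S l < n + 1 by omega
  refine Nat.nth_lt_of_lt_count ?_
  have := Nat.count_add_count_not (· ∈ S) (n + 1)
  rw [count_mem_succ_eq_card hS] at this
  omega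

variable (hadm : ∀ v ∈ S, 2 * #{x ∈ S | x ≤ v} < v)
include hadm

theorem two_mul_add_two_lt_peakValue {i : ℕ} (hi : i < #S) : 2 * i + 2 < peakValue n S i := by
  have := hadm _ (peakValue_mem hS hi)
  rw [card_filter_le_peakValue hS hi] at this
  omega

theorem gapValue_lt_peakValue {i : ℕ} (hi : i < #S) : gapValue S (i + 2) < peakValue n S i := by
  refine Nat.nth_lt_of_lt_count ?_
  rw [count_notMem_peakValue hS hi]
  have := two_mul_add_two_lt_peakValue hS hadm hi
  omega

theorem two_mul_card_le : 2 * #S ≤ n := by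
  rcases Nat.eq_zero_or_pos #S with h | h
  · omega
  · have := two_mul_add_two_lt_peakValue hS hadm (Nat.sub_lt h one_pos)
    have := peakValue_le hS (Nat.sub_lt h one_pos)
    omega

theorem peakPerm_lt_peakPerm_succ {p : ℕ} (hp : 1 ≤ p) (hpE : ∀ i < #S, 2 * i + 2 ≠ p) :
    peakPerm n S p < peakPerm n S (p + 1) := by
  rcases le_or_gt p (2 * #S) with hle | hgt
  · obtain ⟨i, hi, rfl⟩ : ∃ i < #S, 2 * i + 1 = p := by
      have := hpE (p / 2 - 1)
      exact ⟨p / 2, by omega, by omega⟩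
    rw [peakPerm_two_mul_add_one hi.le, peakPerm_two_mul_add_two hi]
    exact (gapValue_strictMono (Nat.lt_succ_self _)).trans (gapValue_lt_peakValue hS hadm hi)
  · rw [peakPerm_of_two_mul_card_lt hgt, peakPerm_of_two_mul_card_lt (by omega)]
    exact gapValue_strictMono (by omega)

theorem isPermOn_peakPerm : IsPermOn n (peakPerm n S) := by
  have hcard := two_mul_card_le hS hadm
  have hmaps : Set.MapsTo (peakPerm n S) (Set.Icc 1 n) (Set.Icc 1 n) := by
    rintro p ⟨hp1, hpn⟩
    unfold peakPerm
    split_ifs with hE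
    · exact mem_Icc.1 (hS (peakValue_mem hS (by omega)))
    · have hl : 1 ≤ p - min #S (p / 2) := by omega
      exact ⟨hl.trans (gapValue_strictMono.id_le _), gapValue_le hS (by omega)⟩
  refine ((Set.finite_Icc 1 n).injOn_iff_bijOn_of_mapsTo hmaps).1 ?_
  rintro p ⟨hp1, hpn⟩ q ⟨hq1, hqn⟩ hpq
  unfold peakPerm at hpq
  split_ifs at hpq with hp hq hq
  · have := peakValue_strictMono.injective hpq
    omega
  · exact absurd (hpq ▸ peakValue_mem hS (by omega)) (gapValue_notMem _)
  · exact absurd (hpq.symm ▸ peakValue_mem hS (by omega)) (gapValue_notMem _)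
  · have := gapValue_strictMono.injective hpq
    omega

theorem CP_peakPerm : CP n (peakPerm n S) = S := by
  have hpeaks : {p ∈ Icc 2 (n - 1) | peakPerm n S (p - 1) < peakPerm n S p ∧
      peakPerm n S (p + 1) < peakPerm n S p} = (range #S).image (fun i => 2 * i + 2) := by
    ext p
    simp only [mem_filter, mem_Icc, mem_image, mem_range]
    constructor
    · rintro ⟨⟨hp2, -⟩, -, hpeak⟩
      by_contra! hpE
      exact (peakPerm_lt_peakPerm_succ hS hadm (by omega) hpE).not_gt hpeak
    · rintro ⟨i, hi, rfl⟩
      have hlt := gapValue_lt_peakValue hS hadm hi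
      have := two_mul_add_two_lt_peakValue hS hadm hi
      have := peakValue_le hS hi
      rw [peakPerm_two_mul_add_two hi, show 2 * i + 2 - 1 = 2 * i + 1 by omega,
        peakPerm_two_mul_add_one hi.le, show 2 * i + 2 + 1 = 2 * (i + 1) + 1 by ring,
        peakPerm_two_mul_add_one hi]
      exact ⟨⟨by omega, by omega⟩, (gapValue_strictMono (Nat.lt_succ_self _)).trans hlt, hlt⟩
  rw [CP, hpeaks, image_image]
  conv_rhs => rw [← image_peakValue (n := n) hS]
  exact image_congr fun i hi => peakPerm_two_mul_add_two (mem_range.1 hi)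

end Realization

theorem mem_Pn_iff {n : ℕ} {S : Finset ℕ} :
    S ∈ Pn n ↔ S ⊆ Icc 1 n ∧ ∀ v ∈ S, 2 * #{x ∈ S | x ≤ v} < v := by
  classical
  rw [Pn, mem_filter, mem_powerset]
  constructor
  · rintro ⟨hS, σ, hσ, rfl⟩
    exact ⟨hS, fun v hv => two_mul_card_filter_le_lt_of_mem_CP hσ hv⟩
  · rintro ⟨hS, hadm⟩
    exact ⟨hS, peakPerm n S, isPermOn_peakPerm hS hadm, CP_peakPerm hS hadm⟩

theorem isLowerSet_Pn (n : ℕ) : IsLowerSet (Pn n : Set (Finset ℕ)) := by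
  intro S T hTS hS
  rw [mem_coe, mem_Pn_iff] at hS ⊢
  refine ⟨hTS.trans hS.1, fun v hv => ?_⟩
  have := card_le_card (filter_subset_filter (· ≤ v) hTS)
  have := hS.2 v (hTS hv)
  omega

theorem card_le_of_mem_Pn {n : ℕ} {S : Finset ℕ} (hS : S ∈ Pn n) : #S ≤ (n - 1) / 2 := by
  obtain rfl | hne := S.eq_empty_or_nonempty
  · simp
  · obtain ⟨hSn, hadm⟩ := mem_Pn_iff.1 hS
    have hmax := hadm _ (S.max'_mem hne)
    rw [filter_true_of_mem fun x hx => S.le_max' x hx] at hmax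
    have := (mem_Icc.1 (hSn (S.max'_mem hne))).2
    omega

theorem sum_pow_card_Pn (n k : ℕ) :
    ∑ S ∈ Pn n, k ^ #S = ∑ j ∈ range ((n - 1) / 2 + 1), pcount n j * k ^ j := by
  rw [← sum_fiberwise_of_maps_to (g := card)
    fun S hS => mem_range.2 (Nat.lt_succ_of_le (card_le_of_mem_Pn hS))]
  refine sum_congr rfl fun j _ => ?_
  rw [pcount, ← smul_eq_mul, ← sum_const]
  exact sum_congr rfl fun S hS => by rw [(mem_filter.1 hS).2]

theorem hilbert_polynomial_A_general (n : ℕ) (K : Type*) [Field K]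
    (k : ℕ) (hk : 1 ≤ k) :
    Module.finrank K
      (Submodule.map
        (Ideal.Quotient.mkₐ K
          (Ideal.span {p : MvPolynomial {S : Finset ℕ // S ∈ Pn n} K |
            ∃ S T : {S : Finset ℕ // S ∈ Pn n},
              (¬ S.val ⊆ T.val ∧ ¬ T.val ⊆ S.val) ∧
              p = MvPolynomial.X S * MvPolynomial.X T})).toLinearMap
        (MvPolynomial.homogeneousSubmodule {S : Finset ℕ // S ∈ Pn n} K k)) =
      ∑ j ∈ Finset.range ((n - 1) / 2 + 1), pcount n j * k ^ j := by
  obtain ⟨k, rfl⟩ := Nat.exists_eq_add_of_le' hk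
  calc _ = #(multichains (univ : Finset {S // S ∈ Pn n}) (k + 1)) :=
        finrank_map_homogeneousSubmodule_quotient_incomparable _ K (k + 1)
    _ = #(multichains (Pn n) (k + 1)) := card_multichains_univ_coe _ _
    _ = ∑ S ∈ Pn n, (k + 1) ^ #S := card_multichains_of_isLowerSet (isLowerSet_Pn n) k
    _ = _ := sum_pow_card_Pn n (k + 1)

/-- Theorem 4.1: the Hilbert function of the algebra `A_{P_n} = K[x_S : S ∈ P_n]/I`,
where `I` is generated by the products `x_S·x_T` over incomparable pairs `S, T ∈ P_n`:
for `k ≥ 1`, `dim_K A_{P_n}^k = Σ_{j=0}^{⌊(n−1)/2⌋} p_{n,j−1}·k^j`, i.e. the Hilbert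
polynomial is `x^{⌊(n−1)/2⌋}·P_n(1/x)`. -/
theorem hilbert_polynomial_A (n : ℕ) (hn : 3 ≤ n) (K : Type*) [Field K]
    (k : ℕ) (hk : 1 ≤ k) :
    Module.finrank K
      (Submodule.map
        (Ideal.Quotient.mkₐ K
          (Ideal.span {p : MvPolynomial {S : Finset ℕ // S ∈ Pn n} K |
            ∃ S T : {S : Finset ℕ // S ∈ Pn n},
              (¬ S.val ⊆ T.val ∧ ¬ T.val ⊆ S.val) ∧
              p = MvPolynomial.X S * MvPolynomial.X T})).toLinearMap
        (MvPolynomial.homogeneousSubmodule {S : Finset ℕ // S ∈ Pn n} K k)) =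
      ∑ j ∈ Finset.range ((n - 1) / 2 + 1), pcount n j * k ^ j :=
  hilbert_polynomial_A_general n K k hk
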